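/- Let r⁺, r⁻ satisfy the partial cocycle identities (CCI⁺), (CCI⁻) and the balance identity (Bal). Then for all configurations γ⁺, γ⁻ ⊆ X, all disjoint finite configurations η₁⁺, η₂⁺, and every finite configuration η⁻: R(γ⁺, γ⁻, η₁⁺ ∪ η₂⁺, η⁻) = R(γ⁺∪η₂⁺, γ⁻, η₁⁺, η⁻)·R⁺(γ⁺, γ⁻, η₂⁺). -/

import Mathlib

open scoped NNReal

/-- Iterated product of the partial relative energy density `r⁺` along an
enumeration (list) of a finite configuration. -/
def RplusL {X : Type*} (rp : Set X → Set X → X → ℝ≥0) (γm : Set X) :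
    Set X → List X → ℝ≥0
  | _, [] => 1
  | γp, x :: xs => rp γp γm x * RplusL rp γm (insert x γp) xs

/-- `R⁺(γ⁺, γ⁻, η⁺)`: the iterated product of `r⁺` along a (fixed, arbitrary)
duplicate-free enumeration of the finite configuration `η⁺`; under (CCI⁺) it is
independent of the enumeration. -/
noncomputable def Rplus {X : Type*} (rp : Set X → Set X → X → ℝ≥0)
    (γp γm : Set X) (η : Finset X) : ℝ≥0 :=
  RplusL rp γm γp η.toList

/-- Iterated product of the partial relative energy density `r⁻` along an
enumeration (list) of a finite configuration. -/
def RminusL {X : Type*} (rm : Set X → Set X → X → ℝ≥0) (γp : Set X) :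
    Set X → List X → ℝ≥0
  | _, [] => 1
  | γm, y :: ys => rm γp γm y * RminusL rm γp (insert y γm) ys

/-- `R⁻(γ⁺, γ⁻, η⁻)`: the iterated product of `r⁻` along a (fixed, arbitrary)
duplicate-free enumeration of the finite configuration `η⁻`; under (CCI⁻) it is
independent of the enumeration. -/
noncomputable def Rminus {X : Type*} (rm : Set X → Set X → X → ℝ≥0)
    (γp γm : Set X) (η : Finset X) : ℝ≥0 :=
  RminusL rm γp γm η.toList

/-- `R(γ⁺, γ⁻, η⁺, η⁻) := R⁺(γ⁺, γ⁻∪η⁻, η⁺)·R⁻(γ⁺, γ⁻, η⁻)`. -/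
noncomputable def Rfull {X : Type*} (rp rm : Set X → Set X → X → ℝ≥0)
    (γp γm : Set X) (ηp ηm : Finset X) : ℝ≥0 :=
  Rplus rp γp (γm ∪ ↑ηm) ηp * Rminus rm γp γm ηm

/-!
Under (CCI⁺) the product `R⁺` does not depend on the enumeration, so enumerating `η₂⁺` before
`η₁⁺` splits `R⁺(γ⁺, γ⁻ ∪ η⁻, η₁⁺ ∪ η₂⁺)` into `R⁺(γ⁺, γ⁻ ∪ η⁻, η₂⁺) · R⁺(γ⁺ ∪ η₂⁺, γ⁻ ∪ η⁻, η₁⁺)`.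
Iterating (Bal) over both enumerations moves the `η₂⁺` factor across `R⁻`:
`R⁺(γ⁺, γ⁻ ∪ η⁻, η₂⁺) · R⁻(γ⁺, γ⁻, η⁻) = R⁻(γ⁺ ∪ η₂⁺, γ⁻, η⁻) · R⁺(γ⁺, γ⁻, η₂⁺)`.
-/

section Lists

variable {X : Type*}

lemma Set.union_setOf_mem_cons (γ : Set X) (x : X) (l : List X) :
    γ ∪ {z | z ∈ x :: l} = insert x γ ∪ {z | z ∈ l} := by
  ext z
  simp only [Set.mem_union, Set.mem_ofPred_eq, List.mem_cons, Set.mem_insert_iff]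
  tauto

lemma RplusL_append (rp : Set X → Set X → X → ℝ≥0) (γm : Set X) (l₁ l₂ : List X)
    (γp : Set X) :
    RplusL rp γm γp (l₁ ++ l₂)
      = RplusL rp γm γp l₁ * RplusL rp γm (γp ∪ {x | x ∈ l₁}) l₂ := by
  induction l₁ generalizing γp with
  | nil => simp [RplusL]
  | cons x xs ih =>
    rw [List.cons_append, RplusL, RplusL, ih, Set.union_setOf_mem_cons, mul_assoc]

lemma RplusL_perm (rp : Set X → Set X → X → ℝ≥0)
    (hCCIp : ∀ (γp γm : Set X) (x x' : X),
      rp (insert x' γp) γm x * rp γp γm x' = rp (insert x γp) γm x' * rp γp γm x)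
    (γm : Set X) {l l' : List X} (h : l.Perm l') (γp : Set X) :
    RplusL rp γm γp l = RplusL rp γm γp l' := by
  induction h generalizing γp with
  | nil => rfl
  | cons x _ ih => simp [RplusL, ih]
  | swap x y l =>
    simp only [RplusL]
    rw [Set.insert_comm, ← mul_assoc, ← mul_assoc, mul_comm (rp γp γm y),
      mul_comm (rp γp γm x), hCCIp]
  | trans _ _ ih₁ ih₂ => rw [ih₁, ih₂]

variable (rp rm : Set X → Set X → X → ℝ≥0)

lemma rp_mul_RminusL
    (hBal : ∀ (γp γm : Set X) (x y : X),
      rp γp (insert y γm) x * rm γp γm y = rm (insert x γp) γm y * rp γp γm x)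
    (lm : List X) (γp γm : Set X) (x : X) :
    rp γp (γm ∪ {y | y ∈ lm}) x * RminusL rm γp γm lm
      = RminusL rm (insert x γp) γm lm * rp γp γm x := by
  induction lm generalizing γm with
  | nil => simp [RminusL]
  | cons y ys ih =>
    simp only [RminusL, Set.union_setOf_mem_cons]
    calc rp γp (insert y γm ∪ {z | z ∈ ys}) x * (rm γp γm y * RminusL rm γp (insert y γm) ys)
        = rm γp γm y * (RminusL rm (insert x γp) (insert y γm) ys * rp γp (insert y γm) x) := by
          rw [← ih]; ring
      _ = RminusL rm (insert x γp) (insert y γm) ys * (rp γp (insert y γm) x * rm γp γm y) := by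
          ring
      _ = rm (insert x γp) γm y * RminusL rm (insert x γp) (insert y γm) ys * rp γp γm x := by
          rw [hBal]; ring

lemma RplusL_mul_RminusL
    (hBal : ∀ (γp γm : Set X) (x y : X),
      rp γp (insert y γm) x * rm γp γm y = rm (insert x γp) γm y * rp γp γm x)
    (lm lp : List X) (γp γm : Set X) :
    RplusL rp (γm ∪ {y | y ∈ lm}) γp lp * RminusL rm γp γm lm
      = RminusL rm (γp ∪ {x | x ∈ lp}) γm lm * RplusL rp γm γp lp := by
  induction lp generalizing γp with
  | nil => simp [RplusL]
  | cons x xs ih =>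
    simp only [RplusL, Set.union_setOf_mem_cons]
    calc rp γp (γm ∪ {y | y ∈ lm}) x * RplusL rp (γm ∪ {y | y ∈ lm}) (insert x γp) xs
          * RminusL rm γp γm lm
        = RplusL rp (γm ∪ {y | y ∈ lm}) (insert x γp) xs * RminusL rm (insert x γp) γm lm
          * rp γp γm x := by
          rw [mul_right_comm, rp_mul_RminusL rp rm hBal]; ring
      _ = RminusL rm (insert x γp ∪ {z | z ∈ xs}) γm lm
          * (rp γp γm x * RplusL rp γm (insert x γp) xs) := by
          rw [ih]; ring

end Lists

section Finsets

variable {X : Type*}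

lemma Finset.setOf_mem_toList (η : Finset X) : {x | x ∈ η.toList} = (η : Set X) := by
  ext; simp

lemma Rplus_union [DecidableEq X] (rp : Set X → Set X → X → ℝ≥0)
    (hCCIp : ∀ (γp γm : Set X) (x x' : X),
      rp (insert x' γp) γm x * rp γp γm x' = rp (insert x γp) γm x' * rp γp γm x)
    (γp γm : Set X) {η₁ η₂ : Finset X} (hdisj : Disjoint η₁ η₂) :
    Rplus rp γp γm (η₁ ∪ η₂) = Rplus rp γp γm η₂ * Rplus rp (γp ∪ ↑η₂) γm η₁ := by
  have hperm : (η₁ ∪ η₂).toList.Perm (η₂.toList ++ η₁.toList) := by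
    refine List.perm_of_nodup_nodup_toFinset_eq (Finset.nodup_toList _) ?_ (by
      simp [Finset.union_comm])
    refine List.nodup_append.mpr ⟨Finset.nodup_toList _, Finset.nodup_toList _, ?_⟩
    rintro a ha _ hb rfl
    exact Finset.disjoint_left.mp hdisj (Finset.mem_toList.mp hb) (Finset.mem_toList.mp ha)
  unfold Rplus
  rw [RplusL_perm rp hCCIp γm hperm, RplusL_append, Finset.setOf_mem_toList]

lemma Rplus_mul_Rminus (rp rm : Set X → Set X → X → ℝ≥0)
    (hBal : ∀ (γp γm : Set X) (x y : X),
      rp γp (insert y γm) x * rm γp γm y = rm (insert x γp) γm y * rp γp γm x)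
    (γp γm : Set X) (ηp ηm : Finset X) :
    Rplus rp γp (γm ∪ ↑ηm) ηp * Rminus rm γp γm ηm
      = Rminus rm (γp ∪ ↑ηp) γm ηm * Rplus rp γp γm ηp := by
  have := RplusL_mul_RminusL rp rm hBal ηm.toList ηp.toList γp γm
  rwa [Finset.setOf_mem_toList, Finset.setOf_mem_toList] at this

end Finsets

theorem R_union_plus_general {X : Type*} [DecidableEq X]
    (rp rm : Set X → Set X → X → ℝ≥0)
    (hCCIp : ∀ (γp γm : Set X) (x x' : X),
      rp (insert x' γp) γm x * rp γp γm x' = rp (insert x γp) γm x' * rp γp γm x)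
    (hBal : ∀ (γp γm : Set X) (x y : X),
      rp γp (insert y γm) x * rm γp γm y = rm (insert x γp) γm y * rp γp γm x)
    (γp γm : Set X) (η₁ η₂ ηm : Finset X) (hdisj : Disjoint η₁ η₂) :
    Rfull rp rm γp γm (η₁ ∪ η₂) ηm
      = Rfull rp rm (γp ∪ ↑η₂) γm η₁ ηm * Rplus rp γp γm η₂ := by
  unfold Rfull
  calc Rplus rp γp (γm ∪ ↑ηm) (η₁ ∪ η₂) * Rminus rm γp γm ηm
      = Rplus rp (γp ∪ ↑η₂) (γm ∪ ↑ηm) η₁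
          * (Rplus rp γp (γm ∪ ↑ηm) η₂ * Rminus rm γp γm ηm) := by
        rw [Rplus_union rp hCCIp _ _ hdisj]; ring
    _ = Rplus rp (γp ∪ ↑η₂) (γm ∪ ↑ηm) η₁ * Rminus rm (γp ∪ ↑η₂) γm ηm
          * Rplus rp γp γm η₂ := by
        rw [Rplus_mul_Rminus rp rm hBal]; ring

/-- Under (CCI⁺), (CCI⁻) and the balance identity (Bal), for all configurations
`γ⁺, γ⁻`, all disjoint finite configurations `η₁⁺, η₂⁺` and every finite
configuration `η⁻`:
`R(γ⁺, γ⁻, η₁⁺ ∪ η₂⁺, η⁻) = R(γ⁺∪η₂⁺, γ⁻, η₁⁺, η⁻)·R⁺(γ⁺, γ⁻, η₂⁺)`. -/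
theorem R_union_plus {X : Type*} [DecidableEq X]
    (rp rm : Set X → Set X → X → ℝ≥0)
    (hCCIp : ∀ (γp γm : Set X) (x x' : X),
      rp (insert x' γp) γm x * rp γp γm x' = rp (insert x γp) γm x' * rp γp γm x)
    (hCCIm : ∀ (γp γm : Set X) (y y' : X),
      rm γp (insert y' γm) y * rm γp γm y' = rm γp (insert y γm) y' * rm γp γm y)
    (hBal : ∀ (γp γm : Set X) (x y : X),
      rp γp (insert y γm) x * rm γp γm y = rm (insert x γp) γm y * rp γp γm x)
    (γp γm : Set X) (η₁ η₂ ηm : Finset X) (hdisj : Disjoint η₁ η₂) :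
    Rfull rp rm γp γm (η₁ ∪ η₂) ηm
      = Rfull rp rm (γp ∪ ↑η₂) γm η₁ ηm * Rplus rp γp γm η₂ :=
  R_union_plus_general rp rm hCCIp hBal γp γm η₁ η₂ ηm hdisj
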